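/- arXiv:1811.06097 — 3 statements merged into one kernel-verified Lean document; each statement's English description precedes it below -/
import Mathlib

section
/- The Alexandrov topology on 2-dimensional Minkowski space, generated by the sets I⁺(x) and I⁻(y) for all x, y, equals the Euclidean topology on ℝ². -/
/-!
Chronology in the plane reads `|Δx| < Δt`, a strict inequality between continuous functions,
so the cones `I⁺(x)`, `I⁻(y)` are Euclidean-open. Conversely the diamond
`I⁺(p - (ε, 0)) ∩ I⁻(p + (ε, 0))` is the tilted square `|Δt| + |Δx| < ε` around `p`, which
contains `p` and lies in the sup-norm `ε`-ball, so every Euclidean neighbourhood of `p` is an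
Alexandrov neighbourhood.
-/

/-- Minkowski quadratic form on ℝ². -/
def Q (v : ℝ × ℝ) : ℝ := v.1 ^ 2 - v.2 ^ 2

def Chron (x y : ℝ × ℝ) : Prop := Q (y - x) > 0 ∧ (y - x).1 > 0

theorem chron_iff {x y : ℝ × ℝ} : Chron x y ↔ |y.2 - x.2| < y.1 - x.1 := by
  rw [Chron, Q, Prod.fst_sub, Prod.snd_sub, gt_iff_lt, sub_pos, sq_lt_sq]
  constructor
  · rintro ⟨h, hpos⟩
    rwa [abs_of_pos hpos] at h
  · intro h
    have hpos : 0 < y.1 - x.1 := (abs_nonneg _).trans_lt h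
    exact ⟨by rwa [abs_of_pos hpos], hpos⟩

theorem isOpen_setOf_chron_left (x : ℝ × ℝ) : IsOpen {z | Chron x z} := by
  simp only [chron_iff]
  exact isOpen_lt (by fun_prop) (by fun_prop)

theorem isOpen_setOf_chron_right (y : ℝ × ℝ) : IsOpen {z | Chron z y} := by
  simp only [chron_iff]
  exact isOpen_lt (by fun_prop) (by fun_prop)

theorem chron_diamond_subset_ball (p : ℝ × ℝ) (ε : ℝ) :
    {z | Chron (p - (ε, 0)) z} ∩ {z | Chron z (p + (ε, 0))} ⊆ Metric.ball p ε := by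
  rintro z ⟨hpast, hfuture⟩
  simp only [Set.mem_ofPred_eq, chron_iff, Prod.fst_sub, Prod.snd_sub, Prod.fst_add, Prod.snd_add,
    sub_zero, add_zero, abs_lt] at hpast hfuture
  rw [Metric.mem_ball, Prod.dist_eq, max_lt_iff, Real.dist_eq, Real.dist_eq, abs_lt, abs_lt]
  refine ⟨⟨?_, ?_⟩, ?_, ?_⟩ <;> linarith

theorem chron_sub_mk_zero (p : ℝ × ℝ) {ε : ℝ} (hε : 0 < ε) : Chron (p - (ε, 0)) p := by
  simp [chron_iff, hε]

theorem chron_add_mk_zero (p : ℝ × ℝ) {ε : ℝ} (hε : 0 < ε) : Chron p (p + (ε, 0)) := by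
  simp [chron_iff, hε]

theorem alexandrov_eq_euclidean :
    TopologicalSpace.generateFrom
      ({S : Set (ℝ × ℝ) | ∃ x, S = {z | Chron x z}} ∪
        {S : Set (ℝ × ℝ) | ∃ y, S = {z | Chron z y}}) =
      (inferInstance : TopologicalSpace (ℝ × ℝ)) := by
  refine le_antisymm (le_of_nhds_le_nhds fun p => Metric.nhds_basis_ball.ge_iff.2 fun ε hε => ?_)
    (le_generateFrom ?_)
  · rw [TopologicalSpace.nhds_generateFrom]
    refine Filter.mem_of_superset (Filter.inter_mem ?_ ?_) (chron_diamond_subset_ball p ε)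
    · exact Filter.le_principal_iff.1 (biInf_le _ ⟨chron_sub_mk_zero p hε, .inl ⟨_, rfl⟩⟩)
    · exact Filter.le_principal_iff.1 (biInf_le _ ⟨chron_add_mk_zero p hε, .inr ⟨_, rfl⟩⟩)
  · rintro s (⟨x, rfl⟩ | ⟨y, rfl⟩)
    exacts [isOpen_setOf_chron_left x, isOpen_setOf_chron_right y]
end

section
/- The intersection topology Z_in^≪ on 2-dimensional Minkowski space, with basis {U ∩ V : U Euclidean-open, V open in T_in^≪}, is strictly finer than the Euclidean topology. -/
/-- The interval topology generated by complements of chronological cones. -/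
def Tin : TopologicalSpace (ℝ × ℝ) :=
  TopologicalSpace.generateFrom
    ({S : Set (ℝ × ℝ) | ∃ x, S = {z | Chron x z}ᶜ} ∪
      {S : Set (ℝ × ℝ) | ∃ x, S = {z | Chron z x}ᶜ})

/-- The intersection topology of the Euclidean topology and `Tin`. -/
def Zin : TopologicalSpace (ℝ × ℝ) :=
  TopologicalSpace.generateFrom
    {W : Set (ℝ × ℝ) | ∃ U V, IsOpen U ∧ Tin.IsOpen V ∧ W = U ∩ V}

/-!
`Zin` is the infimum of the Euclidean topology and `Tin`, so it is strictly finer than the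
Euclidean topology exactly when some `Tin`-open set is not Euclidean-open. The complement of
the chronological future `I⁺(x)` is such a set: it contains the null point `x + (1, 1)`, which
is a limit of the timelike points `x + (1 + t, 1)`, `t > 0`.
-/

open Filter Topology

theorem TopologicalSpace.generateFrom_inter_isOpen {α : Type*} (a b : TopologicalSpace α) :
    generateFrom {W | ∃ U V, IsOpen[a] U ∧ IsOpen[b] V ∧ W = U ∩ V} = a ⊓ b := by
  apply le_antisymm
  · rw [← generateFrom_union_isOpen]
    apply generateFrom_anti
    rintro W (hW | hW)
    · exact ⟨W, Set.univ, hW, @isOpen_univ _ b, (Set.inter_univ W).symm⟩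
    · exact ⟨Set.univ, W, @isOpen_univ _ a, hW, (Set.univ_inter W).symm⟩
  · apply le_generateFrom
    rintro _ ⟨U, V, hU, hV, rfl⟩
    exact @IsOpen.inter _ (a ⊓ b) _ _ (inf_le_left (a := a) U hU) (inf_le_right (a := a) V hV)

theorem Zin_eq_inf : Zin = (inferInstance : TopologicalSpace (ℝ × ℝ)) ⊓ Tin :=
  TopologicalSpace.generateFrom_inter_isOpen _ _

theorem Tin_isOpen_compl_chron_future (x : ℝ × ℝ) : Tin.IsOpen {z | Chron x z}ᶜ :=
  TopologicalSpace.isOpen_generateFrom_of_mem (Or.inl ⟨x, rfl⟩)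

theorem not_isClosed_chron_future (x : ℝ × ℝ) : ¬ IsClosed {z | Chron x z} := by
  let path : ℝ → ℝ × ℝ := fun t => x + (1 + t, 1)
  have hnull : ¬ Chron x (path 0) := fun h => by
    simpa [path, Q] using h.1
  have htendsto : Tendsto path (𝓝[>] 0) (𝓝 (path 0)) :=
    ((by fun_prop : Continuous path).tendsto 0).mono_left nhdsWithin_le_nhds
  have htimelike : ∀ᶠ t in 𝓝[>] 0, path t ∈ {z | Chron x z} := by
    filter_upwards [self_mem_nhdsWithin] with t (ht : 0 < t)
    simp only [path, Chron, Q, add_sub_cancel_left]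
    constructor <;> nlinarith
  exact fun hclosed => hnull (hclosed.mem_of_tendsto htendsto htimelike)

/-- `Zin` is strictly finer than the Euclidean topology (finer = `≤` in Mathlib). -/
theorem intersection_strictly_finer :
    Zin < (inferInstance : TopologicalSpace (ℝ × ℝ)) := by
  rw [Zin_eq_inf, inf_lt_left]
  intro h
  exact not_isClosed_chron_future 0 (isOpen_compl_iff.mp (h _ (Tin_isOpen_compl_chron_future 0)))
end

section
/- In 2-dimensional Minkowski space, the chronological order and the horismos determine each other: x lies on the future light cone of y or equals it in the sense that Q(y−x) = 0 with (y−x)₀ ≥ 0 if and only if (x does not chronologically precede y) and (for all z, y ≪ z implies x ≪ z). -/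
/-! In two dimensions the light cone of `v` is `v.1 = |v.2|`, so the chronological order, the
causal order and the horismos compare `(y - x).1` with `|(y - x).2|` by `<`, `≤` and `=`. The
triangle inequality for `|·|` makes `≪` absorb a causal step, and testing the inclusion of
chronological futures `I⁺(y) ⊆ I⁺(x)` on the points `y + (ε, 0)` shows that `x` causally precedes
`y`. -/

def Causal (x y : ℝ × ℝ) : Prop := |(y - x).2| ≤ (y - x).1

theorem Q_eq_zero_and_nonneg_iff (v : ℝ × ℝ) : (Q v = 0 ∧ v.1 ≥ 0) ↔ v.1 = |v.2| := by
  rw [Q, sub_eq_zero, sq_eq_sq_iff_abs_eq_abs]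
  constructor
  · rintro ⟨h, hv⟩
    rwa [abs_of_nonneg hv] at h
  · intro h
    have hv : 0 ≤ v.1 := h ▸ abs_nonneg v.2
    exact ⟨by rw [abs_of_nonneg hv, h], hv⟩

theorem chron_iff_abs_lt (x y : ℝ × ℝ) : Chron x y ↔ |(y - x).2| < (y - x).1 := by
  rw [Chron, Q, gt_iff_lt, sub_pos, sq_lt_sq]
  constructor
  · rintro ⟨h, hpos⟩
    rwa [abs_of_pos hpos] at h
  · intro h
    have hpos : 0 < (y - x).1 := (abs_nonneg _).trans_lt h
    exact ⟨by rwa [abs_of_pos hpos], hpos⟩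

theorem Causal.chron_of_chron {x y z : ℝ × ℝ} (hxy : Causal x y) (hyz : Chron y z) :
    Chron x z := by
  rw [chron_iff_abs_lt] at hyz ⊢
  have hsplit : z - x = (z - y) + (y - x) := by abel
  calc |(z - x).2| = |(z - y).2 + (y - x).2| := by rw [hsplit, Prod.snd_add]
    _ ≤ |(z - y).2| + |(y - x).2| := abs_add_le _ _
    _ < (z - y).1 + (y - x).1 := add_lt_add_of_lt_of_le hyz hxy
    _ = (z - x).1 := by rw [hsplit, Prod.fst_add]

theorem causal_of_forall_chron {x y : ℝ × ℝ} (h : ∀ z, Chron y z → Chron x z) : Causal x y := by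
  refine le_of_forall_pos_lt_add fun ε hε => ?_
  have hy : Chron y (y + (ε, 0)) := by
    rw [chron_iff_abs_lt, add_sub_cancel_left]
    simpa using hε
  have hx := (chron_iff_abs_lt _ _).1 (h _ hy)
  rw [add_sub_right_comm] at hx
  simpa using hx

theorem horismos_iff_chron_characterization (x y : ℝ × ℝ) :
    (Q (y - x) = 0 ∧ (y - x).1 ≥ 0) ↔
      (¬ Chron x y ∧ ∀ z : ℝ × ℝ, Chron y z → Chron x z) := by
  rw [Q_eq_zero_and_nonneg_iff, chron_iff_abs_lt, not_lt]
  constructor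
  · intro h
    exact ⟨h.le, fun _ hyz => Causal.chron_of_chron h.ge hyz⟩
  · rintro ⟨hle, hfut⟩
    exact le_antisymm hle (causal_of_forall_chron hfut)
end
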